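/- arXiv:2107.06093 — 5 statements merged into one kernel-verified Lean document; each statement's English description precedes it below -/
import Mathlib

section
/- Let n ≥ 3 and let P be an edge-probability matrix on n nodes with p̄(P) > 0. Then γ(c,P) ≤ 0 for every admissible community assignment c if and only if P is a homogeneous Erdős–Rényi model, i.e., there exists p ∈ [0,1] such that P i j = p for all i ≠ j. -/
open Finset

/-- The set of unordered pairs of distinct nodes, represented as ordered pairs `(i, j)`
with `i < j`. -/
def allPairs (n : ℕ) : Finset (Fin n × Fin n) :=
  Finset.univ.filter (fun p => p.1 < p.2)

/-- Intra-community pairs of the community assignment `c`. -/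
def pairsIn {n K : ℕ} (c : Fin n → Fin K) : Finset (Fin n × Fin n) :=
  Finset.univ.filter (fun p => p.1 < p.2 ∧ c p.1 = c p.2)

/-- Inter-community pairs of the community assignment `c`. -/
def pairsOut {n K : ℕ} (c : Fin n → Fin K) : Finset (Fin n × Fin n) :=
  Finset.univ.filter (fun p => p.1 < p.2 ∧ c p.1 ≠ c p.2)

/-- Arithmetic mean of `P i j` over a finite set of pairs. -/
noncomputable def meanOver {n : ℕ} (S : Finset (Fin n × Fin n))
    (P : Fin n → Fin n → ℝ) : ℝ :=
  (∑ p ∈ S, P p.1 p.2) / S.card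

/-- `p̄(P)`: mean edge probability over all pairs of distinct nodes. -/
noncomputable def pbar {n : ℕ} (P : Fin n → Fin n → ℝ) : ℝ :=
  meanOver (allPairs n) P

/-- `p̄_in(c, P)`: mean edge probability over intra-community pairs. -/
noncomputable def pbarIn {n K : ℕ} (c : Fin n → Fin K) (P : Fin n → Fin n → ℝ) : ℝ :=
  meanOver (pairsIn c) P

/-- `p̄_out(c, P)`: mean edge probability over inter-community pairs. -/
noncomputable def pbarOut {n K : ℕ} (c : Fin n → Fin K) (P : Fin n → Fin n → ℝ) : ℝ :=
  meanOver (pairsOut c) P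

/-- The homophily parameter `γ(c, P)`. -/
noncomputable def gamma {n K : ℕ} (c : Fin n → Fin K) (P : Fin n → Fin n → ℝ) : ℝ :=
  (pbarIn c P - pbarOut c P) / pbar P

/-- An edge-probability matrix: symmetric, zero diagonal, entries in `[0,1]` off the
diagonal. -/
def IsEdgeProbMatrix {n : ℕ} (P : Fin n → Fin n → ℝ) : Prop :=
  (∀ i j, P i j = P j i) ∧ (∀ i, P i i = 0) ∧
    (∀ i j, i ≠ j → 0 ≤ P i j ∧ P i j ≤ 1)

/-- A community assignment is admissible if some community contains at least two nodes
and at least two communities are nonempty. -/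
def Admissible {n K : ℕ} (c : Fin n → Fin K) : Prop :=
  (∃ i j : Fin n, i ≠ j ∧ c i = c j) ∧ (∃ i j : Fin n, c i ≠ c j)

lemma mem_allPairs {n : ℕ} {q : Fin n × Fin n} : q ∈ allPairs n ↔ q.1 < q.2 := by
  simp [allPairs]

lemma meanOver_const {n : ℕ} {S : Finset (Fin n × Fin n)} (hS : S.Nonempty)
    {P : Fin n → Fin n → ℝ} {p : ℝ} (h : ∀ q ∈ S, P q.1 q.2 = p) :
    meanOver S P = p := by
  have hc : (S.card : ℝ) ≠ 0 := by
    have := Finset.card_pos.mpr hS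
    positivity
  unfold meanOver
  rw [Finset.sum_congr rfl h, Finset.sum_const, nsmul_eq_mul]
  field_simp

/-- For `n ≥ 3` and an edge-probability matrix `P` with `p̄(P) > 0`,
`γ(c, P) ≤ 0` for every admissible community assignment `c` if and only if `P` is a
homogeneous Erdős–Rényi model. -/
theorem no_homophily_iff_erdos_renyi (n : ℕ) (hn : 3 ≤ n)
    (P : Fin n → Fin n → ℝ) (hP : IsEdgeProbMatrix P) (hp : 0 < pbar P) :
    (∀ (K : ℕ), 1 ≤ K → ∀ c : Fin n → Fin K, Admissible c → gamma c P ≤ 0) ↔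
      ∃ p : ℝ, 0 ≤ p ∧ p ≤ 1 ∧ ∀ i j : Fin n, i ≠ j → P i j = p := by
  obtain ⟨hsym, hdiag, hbd⟩ := hP
  constructor
  · intro H
    set S := ∑ q ∈ allPairs n, P q.1 q.2 with hSdef
    set N := (allPairs n).card with hNdef
    have h01 : (⟨0, by omega⟩ : Fin n) < ⟨1, by omega⟩ := by simp [Fin.lt_def]
    have h02 : (⟨0, by omega⟩ : Fin n) < ⟨2, by omega⟩ := by simp [Fin.lt_def]
    have hmem01 : ((⟨0, by omega⟩ : Fin n), (⟨1, by omega⟩ : Fin n)) ∈ allPairs n :=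
      mem_allPairs.mpr h01
    have hmem02 : ((⟨0, by omega⟩ : Fin n), (⟨2, by omega⟩ : Fin n)) ∈ allPairs n :=
      mem_allPairs.mpr h02
    have hN2 : 2 ≤ N := by
      have : 1 < N := Finset.one_lt_card.mpr
        ⟨_, hmem01, _, hmem02, by simp [Prod.ext_iff, Fin.ext_iff]⟩
      omega
    have hNR : (0 : ℝ) < (N : ℝ) - 1 := by
      have : (2 : ℝ) ≤ (N : ℝ) := by exact_mod_cast hN2
      linarith
    have key : ∀ i j : Fin n, i < j → (N : ℝ) * P i j ≤ S := by
      intro i j hij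
      have hijne : i ≠ j := ne_of_lt hij
      set c : Fin n → Fin n := fun k => if k = j then i else k with hcdef
      have hci : c i = i := by simp [hcdef, hijne]
      have hcj : c j = i := by simp [hcdef]
      obtain ⟨k, hki, hkj⟩ : ∃ k : Fin n, k ≠ i ∧ k ≠ j := by
        by_contra hcon
        push_neg at hcon
        have hsub : (Finset.univ : Finset (Fin n)) ⊆ {i, j} := by
          intro k _
          rcases eq_or_ne k i with h | h
          · simp [h]
          · simp [hcon k h]
        have hle := Finset.card_le_card hsub
        have hle2 := Finset.card_insert_le i ({j} : Finset (Fin n))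
        simp only [Finset.card_univ, Fintype.card_fin, Finset.card_singleton] at hle hle2
        omega
      have hck : c k = k := by simp [hcdef, hkj]
      have hadm : Admissible c :=
        ⟨⟨i, j, hijne, by rw [hci, hcj]⟩, ⟨k, i, by rw [hck, hci]; exact hki⟩⟩
      have hg := H n (by omega) c hadm
      have hmemij : (i, j) ∈ allPairs n := mem_allPairs.mpr hij
      have hin : pairsIn c = {(i, j)} := by
        ext q
        obtain ⟨a, b⟩ := q
        simp only [pairsIn, Finset.mem_filter, Finset.mem_univ, true_and,
          Finset.mem_singleton, Prod.mk.injEq]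
        constructor
        · rintro ⟨hlt, heq⟩
          by_cases ha : a = j
          · by_cases hb : b = j
            · exact absurd (ha.trans hb.symm) (ne_of_lt hlt)
            · simp only [hcdef, if_pos ha, if_neg hb] at heq
              rw [ha, ← heq] at hlt
              exact absurd hij (not_lt_of_gt hlt)
          · by_cases hb : b = j
            · simp only [hcdef, if_neg ha, if_pos hb] at heq
              exact ⟨heq, hb⟩
            · simp only [hcdef, if_neg ha, if_neg hb] at heq
              exact absurd heq (ne_of_lt hlt)
        · rintro ⟨rfl, rfl⟩
          exact ⟨hij, by rw [hci, hcj]⟩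
      have hout : pairsOut c = (allPairs n).erase (i, j) := by
        ext q
        simp only [pairsOut, Finset.mem_filter, Finset.mem_univ, true_and,
          Finset.mem_erase, mem_allPairs]
        constructor
        · rintro ⟨hlt, hne⟩
          refine ⟨?_, hlt⟩
          rintro rfl
          exact hne (by rw [hci, hcj])
        · rintro ⟨hne, hlt⟩
          refine ⟨hlt, fun heq => hne ?_⟩
          have : q ∈ pairsIn c := by
            simp [pairsIn, hlt, heq]
          rw [hin, Finset.mem_singleton] at this
          exact this
      have hpin : pbarIn c P = P i j := by
        rw [pbarIn, hin]
        simp [meanOver]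
      have hpout : pbarOut c P = (S - P i j) / ((N : ℝ) - 1) := by
        rw [pbarOut, hout, meanOver, Finset.sum_erase_eq_sub hmemij,
          Finset.card_erase_of_mem hmemij]
        rw [Nat.cast_sub (by omega : 1 ≤ N), Nat.cast_one]
      have hdiff : pbarIn c P - pbarOut c P ≤ 0 := by
        by_contra hcon
        push_neg at hcon
        have : 0 < gamma c P := div_pos hcon hp
        linarith
      rw [hpin, hpout, sub_nonpos, le_div_iff₀ hNR] at hdiff
      nlinarith [hdiff]
    have hnonneg : ∀ q ∈ allPairs n, 0 ≤ S - (N : ℝ) * P q.1 q.2 := by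
      intro q hq
      have := key q.1 q.2 (mem_allPairs.mp hq)
      linarith
    have hsum0 : ∑ q ∈ allPairs n, (S - (N : ℝ) * P q.1 q.2) = 0 := by
      rw [Finset.sum_sub_distrib, Finset.sum_const, ← Finset.mul_sum, ← hSdef, ← hNdef,
        nsmul_eq_mul]
      ring
    have hall : ∀ q ∈ allPairs n, S - (N : ℝ) * P q.1 q.2 = 0 :=
      (Finset.sum_eq_zero_iff_of_nonneg hnonneg).mp hsum0
    have hNne : ((N : ℝ)) ≠ 0 := by positivity
    have hPval : ∀ i j : Fin n, i < j → P i j = S / N := by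
      intro i j hij
      have := hall (i, j) (mem_allPairs.mpr hij)
      simp only at this
      field_simp
      linarith
    refine ⟨S / N, ?_, ?_, ?_⟩
    · rw [← hPval _ _ h01]
      exact (hbd _ _ (ne_of_lt h01)).1
    · rw [← hPval _ _ h01]
      exact (hbd _ _ (ne_of_lt h01)).2
    · intro i j hij
      rcases lt_trichotomy i j with h | h | h
      · exact hPval i j h
      · exact absurd h hij
      · rw [hsym i j]
        exact hPval j i h
  · rintro ⟨p, hp0, hp1, hpe⟩ K hK c ⟨⟨i, j, hij, hcij⟩, ⟨a, b, hab⟩⟩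
    have hinne : (pairsIn c).Nonempty := by
      rcases lt_trichotomy i j with h | h | h
      · exact ⟨(i, j), by simp [pairsIn, h, hcij]⟩
      · exact absurd h hij
      · exact ⟨(j, i), by simp [pairsIn, h, hcij.symm]⟩
    have houtne : (pairsOut c).Nonempty := by
      have habne : a ≠ b := fun h => hab (by rw [h])
      rcases lt_trichotomy a b with h | h | h
      · exact ⟨(a, b), by simp [pairsOut, h, hab]⟩
      · exact absurd h habne
      · exact ⟨(b, a), by simp [pairsOut, h, Ne.symm hab]⟩
    have h1 : pbarIn c P = p := meanOver_const hinne (by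
      intro q hq
      simp only [pairsIn, Finset.mem_filter] at hq
      exact hpe _ _ (ne_of_lt hq.2.1))
    have h2 : pbarOut c P = p := meanOver_const houtne (by
      intro q hq
      simp only [pairsOut, Finset.mem_filter] at hq
      exact hpe _ _ (ne_of_lt hq.2.1))
    simp [gamma, h1, h2]
end

section
/- Let n ≥ 3 and let P be an edge-probability matrix on n nodes. Suppose there is a pair i₀ ≠ j₀ such that P i₀ j₀ ≥ P k l for every pair k ≠ l, and P i₀ j₀ > P k' l' for at least one pair k' ≠ l'. Then the admissible community assignment c with K = n−1 communities that places i₀ and j₀ in one community and every other node in its own singleton community satisfies p̄_in(c,P) = P i₀ j₀ > p̄_out(c,P); in particular, if p̄(P) > 0 then γ(c,P) > 0. -/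
open Finset

lemma mean_lt_of {α : Type*} {S : Finset α} (f : α → ℝ) (M : ℝ) (hne : S.Nonempty)
    (hle : ∀ x ∈ S, f x ≤ M) (p : α) (hp : p ∈ S) (hlt : f p < M) :
    (∑ x ∈ S, f x) / S.card < M := by
  have hcard : (0:ℝ) < S.card := by
    exact_mod_cast Finset.card_pos.mpr hne
  rw [div_lt_iff₀ hcard]
  calc ∑ x ∈ S, f x < ∑ _x ∈ S, M :=
        Finset.sum_lt_sum hle ⟨p, hp, hlt⟩
    _ = M * S.card := by rw [Finset.sum_const, nsmul_eq_mul, mul_comm]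

lemma key (n : ℕ) (hn : 3 ≤ n)
    (P : Fin n → Fin n → ℝ) (hP : IsEdgeProbMatrix P)
    (i₀ j₀ : Fin n) (hij : i₀ < j₀)
    (hmax : ∀ k l : Fin n, k ≠ l → P k l ≤ P i₀ j₀)
    (hstrict : ∃ k l : Fin n, k ≠ l ∧ P k l < P i₀ j₀)
    {K : ℕ} (c : Fin n → Fin K)
    (hc₀ : c i₀ = c j₀)
    (hc₁ : ∀ k l : Fin n, c k = c l → k = l ∨ ({k, l} : Set (Fin n)) = {i₀, j₀}) :
    pbarIn c P = P i₀ j₀ ∧ pbarOut c P < P i₀ j₀ := by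
  obtain ⟨hsymm, hdiag, hbd⟩ := hP
  -- pairsIn is the singleton (i₀, j₀)
  have hIn : pairsIn c = {(i₀, j₀)} := by
    ext p
    simp only [pairsIn, Finset.mem_filter, Finset.mem_univ, true_and,
      Finset.mem_singleton]
    constructor
    · rintro ⟨hlt, hcc⟩
      rcases hc₁ _ _ hcc with h | h
      · exact absurd h hlt.ne
      · rcases Set.pair_eq_pair_iff.mp h with ⟨h1, h2⟩ | ⟨h1, h2⟩
        · exact Prod.ext h1 h2
        · exfalso; rw [h1, h2] at hlt; exact absurd (hlt.trans hij) (lt_irrefl _)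
    · rintro rfl; exact ⟨hij, hc₀⟩
  have hInval : pbarIn c P = P i₀ j₀ := by
    simp [pbarIn, meanOver, hIn]
  refine ⟨hInval, ?_⟩
  -- strict pair, ordered
  obtain ⟨k, l, hkl, hklt⟩ := hstrict
  have contra : ∀ a b : Fin n, P a b < P i₀ j₀ → ({a, b} : Set (Fin n)) = {i₀, j₀} → False := by
    intro a b hlt heq
    rcases Set.pair_eq_pair_iff.mp heq with ⟨h1, h2⟩ | ⟨h1, h2⟩
    · rw [h1, h2] at hlt; exact lt_irrefl _ hlt
    · rw [h1, h2, hsymm j₀ i₀] at hlt; exact lt_irrefl _ hlt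
  have hswap : ∀ a b : Fin n, a ≠ b → P a b < P i₀ j₀ →
      ∃ q : Fin n × Fin n, q ∈ pairsOut c ∧ P q.1 q.2 < P i₀ j₀ := by
    intro a b hab hlt
    rcases lt_or_gt_of_ne hab with h | h
    · refine ⟨(a, b), ?_, hlt⟩
      simp only [pairsOut, Finset.mem_filter, Finset.mem_univ, true_and]
      refine ⟨h, fun hcc => ?_⟩
      rcases hc₁ _ _ hcc with heq | heq
      · exact hab heq
      · exact contra a b hlt heq
    · refine ⟨(b, a), ?_, by rw [hsymm b a]; exact hlt⟩
      simp only [pairsOut, Finset.mem_filter, Finset.mem_univ, true_and]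
      refine ⟨h, fun hcc => ?_⟩
      rcases hc₁ _ _ hcc with heq | heq
      · exact hab heq.symm
      · exact contra b a (by rw [hsymm b a]; exact hlt) heq
  obtain ⟨q, hq, hqlt⟩ := hswap k l hkl hklt
  have hle : ∀ p ∈ pairsOut c, P p.1 p.2 ≤ P i₀ j₀ := by
    intro p hp
    simp only [pairsOut, Finset.mem_filter] at hp
    exact hmax _ _ hp.2.1.ne
  exact mean_lt_of _ _ ⟨q, hq⟩ hle q hq hqlt

/-- If a pair `(i₀, j₀)` attains the maximum edge probability, strictly
beating at least one pair, then the admissible community assignment with `K = n - 1`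
communities placing `i₀` and `j₀` together and every other node in its own singleton
community has `p̄_in(c,P) = P i₀ j₀ > p̄_out(c,P)`; in particular `γ(c,P) > 0` whenever
`p̄(P) > 0`. -/
theorem max_pair_assignment_positive_homophily (n : ℕ) (hn : 3 ≤ n)
    (P : Fin n → Fin n → ℝ) (hP : IsEdgeProbMatrix P)
    (i₀ j₀ : Fin n) (hij : i₀ ≠ j₀)
    (hmax : ∀ k l : Fin n, k ≠ l → P k l ≤ P i₀ j₀)
    (hstrict : ∃ k l : Fin n, k ≠ l ∧ P k l < P i₀ j₀)
    (c : Fin n → Fin (n - 1))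
    (hc₀ : c i₀ = c j₀)
    (hc₁ : ∀ k l : Fin n, c k = c l → k = l ∨ ({k, l} : Set (Fin n)) = {i₀, j₀}) :
    Admissible c ∧ pbarIn c P = P i₀ j₀ ∧ pbarOut c P < P i₀ j₀ ∧
      (0 < pbar P → 0 < gamma c P) := by
  have hadm : Admissible c := by
    refine ⟨⟨i₀, j₀, hij, hc₀⟩, ?_⟩
    -- find a node distinct from i₀ and j₀
    have : ∃ k : Fin n, k ≠ i₀ ∧ k ≠ j₀ := by
      by_contra h
      push_neg at h
      have hcard : (Finset.univ : Finset (Fin n)).card ≤ ({i₀, j₀} : Finset (Fin n)).card := by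
        apply Finset.card_le_card
        intro x _
        rcases eq_or_ne x i₀ with h1 | h1
        · simp [h1]
        · simp [h x h1]
      have h2 : ({i₀, j₀} : Finset (Fin n)).card ≤ 2 := Finset.card_insert_le _ _ |>.trans (by simp)
      simp only [Finset.card_univ, Fintype.card_fin] at hcard
      omega
    obtain ⟨k, hk1, hk2⟩ := this
    refine ⟨k, i₀, fun hcc => ?_⟩
    rcases hc₁ _ _ hcc with h | h
    · exact hk1 h
    · rcases Set.pair_eq_pair_iff.mp h with ⟨h1, h2⟩ | ⟨h1, h2⟩
      · exact hk1 h1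
      · exact hk2 h1
  have hmain : pbarIn c P = P i₀ j₀ ∧ pbarOut c P < P i₀ j₀ := by
    rcases lt_or_gt_of_ne hij with h | h
    · exact key n hn P hP i₀ j₀ h hmax hstrict c hc₀ hc₁
    · have hsymm := hP.1
      have h' := key n hn P hP j₀ i₀ h
        (fun k l hkl => (hmax k l hkl).trans_eq (hsymm i₀ j₀))
        (by obtain ⟨k, l, hkl, hlt⟩ := hstrict
            exact ⟨k, l, hkl, hlt.trans_eq (hsymm i₀ j₀)⟩)
        c hc₀.symm
        (fun k l hcc => by
          rcases hc₁ k l hcc with h1 | h1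
          · exact Or.inl h1
          · exact Or.inr (h1.trans (Set.pair_comm i₀ j₀)))
      rw [hsymm j₀ i₀] at h'
      exact h'
  refine ⟨hadm, hmain.1, hmain.2, fun hpbar => ?_⟩
  unfold gamma
  apply div_pos _ hpbar
  rw [hmain.1]
  linarith [hmain.2]
end

section
/- Let m ≥ 2 and n = 2m. Let p ∈ [0,1] and q₁, …, q_{n−1} ∈ [0,1], and let P be the edge-probability matrix on n nodes with P i j = p for all pairs i ≠ j with i, j ≤ n−1, and P i n = P n i = qᵢ for i ≤ n−1. If ∑_{i=m+1}^{n−1} qᵢ > ∑_{i=1}^{m} qᵢ, then the community assignment c placing nodes {1,…,m} in one community and nodes {m+1,…,n} in the other satisfies p̄_in(c,P) > p̄_out(c,P). Explicitly, p̄_in(c,P) = (p·(m−1)² + ∑_{i=m+1}^{n−1} qᵢ)/(m(m−1)) and p̄_out(c,P) = (p·(m²−m) + ∑_{i=1}^{m} qᵢ)/m². -/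
open Finset

section Helpers

lemma double_count' {n : ℕ} (R : Fin n → Fin n → Prop) [∀ i j, Decidable (R i j)]
    (hsymm : ∀ i j, R i j → R j i) (hirr : ∀ i, ¬ R i i) (f : Fin n → Fin n → ℝ)
    (hf : ∀ i j, f i j = f j i) :
    ∑ i : Fin n, ∑ j : Fin n, (if R i j then f i j else 0) =
      2 * ∑ x ∈ Finset.univ.filter (fun x : Fin n × Fin n => x.1 < x.2 ∧ R x.1 x.2), f x.1 x.2 := by
  classical
  have h1 : ∑ i : Fin n, ∑ j : Fin n, (if R i j then f i j else 0)
      = ∑ x ∈ (univ : Finset (Fin n × Fin n)).filter (fun x => R x.1 x.2), f x.1 x.2 := by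
    rw [Finset.sum_filter]
    exact (Fintype.sum_prod_type (f := fun x : Fin n × Fin n => if R x.1 x.2 then f x.1 x.2 else 0)).symm
  have h2 : (univ : Finset (Fin n × Fin n)).filter (fun x => R x.1 x.2)
      = (univ.filter (fun x : Fin n × Fin n => x.1 < x.2 ∧ R x.1 x.2)) ∪
        (univ.filter (fun x : Fin n × Fin n => x.1 < x.2 ∧ R x.1 x.2)).image Prod.swap := by
    ext ⟨a, b⟩
    simp only [mem_filter, mem_univ, true_and, mem_union, mem_image, Prod.exists,
      Prod.swap_prod_mk, Prod.mk.injEq]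
    constructor
    · intro h
      rcases lt_trichotomy a b with hab | hab | hab
      · exact Or.inl ⟨hab, h⟩
      · exact absurd h (hab ▸ hirr a)
      · exact Or.inr ⟨b, a, ⟨hab, hsymm _ _ h⟩, rfl, rfl⟩
    · rintro (⟨_, h⟩ | ⟨x, y, ⟨_, h⟩, rfl, rfl⟩)
      · exact h
      · exact hsymm _ _ h
  have hdisj : Disjoint (univ.filter (fun x : Fin n × Fin n => x.1 < x.2 ∧ R x.1 x.2))
      ((univ.filter (fun x : Fin n × Fin n => x.1 < x.2 ∧ R x.1 x.2)).image Prod.swap) := by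
    rw [Finset.disjoint_left]
    rintro ⟨a, b⟩ ha hb
    simp only [mem_filter, mem_univ, true_and, mem_image, Prod.exists,
      Prod.swap_prod_mk, Prod.mk.injEq] at ha hb
    obtain ⟨x, y, ⟨hxy, _⟩, rfl, rfl⟩ := hb
    exact absurd ha.1 (not_lt.2 hxy.le)
  rw [h1, h2, Finset.sum_union hdisj, Finset.sum_image (fun x _ y _ h => Prod.swap_injective h)]
  simp only [Prod.fst_swap, Prod.snd_swap]
  have : ∑ x ∈ univ.filter (fun x : Fin n × Fin n => x.1 < x.2 ∧ R x.1 x.2), f x.2 x.1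
      = ∑ x ∈ univ.filter (fun x : Fin n × Fin n => x.1 < x.2 ∧ R x.1 x.2), f x.1 x.2 :=
    Finset.sum_congr rfl (fun x _ => (hf x.2 x.1))
  rw [this]; ring

lemma sum_ite_ne' (s : Finset ℕ) (i : ℕ) (hi : i ∈ s) (r : ℝ) :
    ∑ j ∈ s, (if i = j then (0:ℝ) else r) = ((s.card : ℝ) - 1) * r := by
  have h : ∀ j ∈ s, (if i = j then (0:ℝ) else r) = r - (if i = j then r else 0) := by
    intro j _; split <;> ring
  rw [Finset.sum_congr rfl h, Finset.sum_sub_distrib, Finset.sum_const,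
    Finset.sum_ite_eq s i (fun _ => r), if_pos hi]
  ring

lemma split_range' (m n : ℕ) (hmn : m ≤ n - 1) (hn : 1 ≤ n) (f : ℕ → ℝ) :
    ∑ j ∈ range n, f j = (∑ j ∈ range m, f j) + (∑ j ∈ Ico m (n-1), f j) + f (n-1) := by
  have h1 : n = (n-1)+1 := by omega
  rw [h1, Finset.sum_range_succ, Nat.add_sub_cancel]
  have h2 : ∑ j ∈ range (n-1), f j = (∑ j ∈ range m, f j) + (∑ j ∈ Ico m (n-1), f j) := by
    simp only [range_eq_Ico]
    rw [← Finset.sum_Ico_consecutive f (Nat.zero_le m) hmn]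
  rw [h2]

lemma eval_in' (m n : ℕ) (hm : 2 ≤ m) (hn : n = 2*m) (p : ℝ) (q : ℕ → ℝ) :
    (∑ i ∈ range n, ∑ j ∈ range n,
      (if i ≠ j ∧ ((i < m) ↔ (j < m)) then
        (if j = n-1 then q i else if i = n-1 then q j else p) else 0))
    = 2 * (p * ((m:ℝ)-1)^2 + ∑ i ∈ Ico m (n-1), q i) := by
  have hmn : m ≤ n - 1 := by omega
  have hn1 : 1 ≤ n := by omega
  set g : ℕ → ℕ → ℝ := fun i j =>
    (if i ≠ j ∧ ((i < m) ↔ (j < m)) then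
        (if j = n-1 then q i else if i = n-1 then q j else p) else 0) with hg
  have hcard : ((n - 1 - m : ℕ) : ℝ) = (m:ℝ) - 1 := by
    have h : n - 1 - m = m - 1 := by omega
    rw [h, Nat.cast_sub (by omega : 1 ≤ m)]; norm_num
  have inner1 : ∀ i ∈ range m, ∑ j ∈ range n, g i j = ((m:ℝ) - 1) * p := by
    intro i hi
    simp only [mem_range] at hi
    rw [split_range' m n hmn hn1 (g i)]
    have e1 : ∑ j ∈ range m, g i j = ((m:ℝ) - 1) * p := by
      have hpt : ∀ j ∈ range m, g i j = if i = j then (0:ℝ) else p := by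
        intro j hj
        simp only [mem_range] at hj
        simp only [hg]
        split_ifs <;> first | rfl | omega
      rw [Finset.sum_congr rfl hpt, sum_ite_ne' (range m) i (mem_range.2 hi) p,
        Finset.card_range]
    have e2 : ∑ j ∈ Ico m (n-1), g i j = 0 := by
      apply Finset.sum_eq_zero
      intro j hj
      simp only [mem_Ico] at hj
      simp only [hg]
      rw [if_neg (by omega)]
    have e3 : g i (n-1) = 0 := by
      simp only [hg]; rw [if_neg (by omega)]
    rw [e1, e2, e3]; ring
  have inner2 : ∀ i ∈ Ico m (n-1), ∑ j ∈ range n, g i j = ((m:ℝ) - 2) * p + q i := by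
    intro i hi
    simp only [mem_Ico] at hi
    rw [split_range' m n hmn hn1 (g i)]
    have e1 : ∑ j ∈ range m, g i j = 0 := by
      apply Finset.sum_eq_zero
      intro j hj
      simp only [mem_range] at hj
      simp only [hg]
      rw [if_neg (by omega)]
    have e2 : ∑ j ∈ Ico m (n-1), g i j = ((m:ℝ) - 2) * p := by
      have hpt : ∀ j ∈ Ico m (n-1), g i j = if i = j then (0:ℝ) else p := by
        intro j hj
        simp only [mem_Ico] at hj
        simp only [hg]
        split_ifs <;> first | rfl | omega
      rw [Finset.sum_congr rfl hpt, sum_ite_ne' (Ico m (n-1)) i (mem_Ico.2 hi) p,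
        Nat.card_Ico, hcard]
      ring
    have e3 : g i (n-1) = q i := by
      simp only [hg]
      split_ifs <;> first | rfl | omega
    rw [e1, e2, e3]; ring
  have inner3 : ∑ j ∈ range n, g (n-1) j = ∑ i ∈ Ico m (n-1), q i := by
    rw [split_range' m n hmn hn1 (g (n-1))]
    have e1 : ∑ j ∈ range m, g (n-1) j = 0 := by
      apply Finset.sum_eq_zero
      intro j hj
      simp only [mem_range] at hj
      simp only [hg]
      rw [if_neg (by omega)]
    have e2 : ∑ j ∈ Ico m (n-1), g (n-1) j = ∑ i ∈ Ico m (n-1), q i := by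
      apply Finset.sum_congr rfl
      intro j hj
      simp only [mem_Ico] at hj
      simp only [hg]
      split_ifs <;> first | rfl | omega
    have e3 : g (n-1) (n-1) = 0 := by
      simp only [hg]; rw [if_neg (by omega)]
    rw [e1, e2, e3]; ring
  rw [split_range' m n hmn hn1 (fun i => ∑ j ∈ range n, g i j)]
  rw [Finset.sum_congr rfl inner1, Finset.sum_congr rfl inner2, inner3,
    Finset.sum_const, Finset.card_range, nsmul_eq_mul, Finset.sum_add_distrib,
    Finset.sum_const, Nat.card_Ico, nsmul_eq_mul, hcard]
  ring

lemma eval_out' (m n : ℕ) (hm : 2 ≤ m) (hn : n = 2*m) (p : ℝ) (q : ℕ → ℝ) :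
    (∑ i ∈ range n, ∑ j ∈ range n,
      (if ¬((i < m) ↔ (j < m)) then
        (if j = n-1 then q i else if i = n-1 then q j else p) else 0))
    = 2 * (p * ((m:ℝ)^2 - (m:ℝ)) + ∑ i ∈ range m, q i) := by
  have hmn : m ≤ n - 1 := by omega
  have hn1 : 1 ≤ n := by omega
  set g : ℕ → ℕ → ℝ := fun i j =>
    (if ¬((i < m) ↔ (j < m)) then
        (if j = n-1 then q i else if i = n-1 then q j else p) else 0) with hg
  have hcard : ((n - 1 - m : ℕ) : ℝ) = (m:ℝ) - 1 := by
    have h : n - 1 - m = m - 1 := by omega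
    rw [h, Nat.cast_sub (by omega : 1 ≤ m)]; norm_num
  have inner1 : ∀ i ∈ range m, ∑ j ∈ range n, g i j = ((m:ℝ) - 1) * p + q i := by
    intro i hi
    simp only [mem_range] at hi
    rw [split_range' m n hmn hn1 (g i)]
    have e1 : ∑ j ∈ range m, g i j = 0 := by
      apply Finset.sum_eq_zero
      intro j hj
      simp only [mem_range] at hj
      simp only [hg]
      rw [if_neg (by omega)]
    have e2 : ∑ j ∈ Ico m (n-1), g i j = ((m:ℝ) - 1) * p := by
      have hpt : ∀ j ∈ Ico m (n-1), g i j = p := by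
        intro j hj
        simp only [mem_Ico] at hj
        simp only [hg]
        split_ifs <;> first | rfl | omega
      rw [Finset.sum_congr rfl hpt, Finset.sum_const, Nat.card_Ico, nsmul_eq_mul, hcard]
    have e3 : g i (n-1) = q i := by
      simp only [hg]
      split_ifs <;> first | rfl | omega
    rw [e1, e2, e3]; ring
  have inner2 : ∀ i ∈ Ico m (n-1), ∑ j ∈ range n, g i j = (m:ℝ) * p := by
    intro i hi
    simp only [mem_Ico] at hi
    rw [split_range' m n hmn hn1 (g i)]
    have e1 : ∑ j ∈ range m, g i j = (m:ℝ) * p := by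
      have hpt : ∀ j ∈ range m, g i j = p := by
        intro j hj
        simp only [mem_range] at hj
        simp only [hg]
        split_ifs <;> first | rfl | omega
      rw [Finset.sum_congr rfl hpt, Finset.sum_const, Finset.card_range, nsmul_eq_mul]
    have e2 : ∑ j ∈ Ico m (n-1), g i j = 0 := by
      apply Finset.sum_eq_zero
      intro j hj
      simp only [mem_Ico] at hj
      simp only [hg]
      rw [if_neg (by omega)]
    have e3 : g i (n-1) = 0 := by
      simp only [hg]; rw [if_neg (by omega)]
    rw [e1, e2, e3]; ring
  have inner3 : ∑ j ∈ range n, g (n-1) j = ∑ i ∈ range m, q i := by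
    rw [split_range' m n hmn hn1 (g (n-1))]
    have e1 : ∑ j ∈ range m, g (n-1) j = ∑ i ∈ range m, q i := by
      apply Finset.sum_congr rfl
      intro j hj
      simp only [mem_range] at hj
      simp only [hg]
      split_ifs <;> first | rfl | omega
    have e2 : ∑ j ∈ Ico m (n-1), g (n-1) j = 0 := by
      apply Finset.sum_eq_zero
      intro j hj
      simp only [mem_Ico] at hj
      simp only [hg]
      rw [if_neg (by omega)]
    have e3 : g (n-1) (n-1) = 0 := by
      simp [hg]
    rw [e1, e2, e3]; ring
  rw [split_range' m n hmn hn1 (fun i => ∑ j ∈ range n, g i j)]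
  rw [Finset.sum_congr rfl inner1, Finset.sum_congr rfl inner2, inner3,
    Finset.sum_add_distrib, Finset.sum_const, Finset.card_range, nsmul_eq_mul,
    Finset.sum_const, Nat.card_Ico, nsmul_eq_mul, hcard]
  ring

lemma fin_double_sum (n : ℕ) (h : ℕ → ℕ → ℝ) :
    ∑ i : Fin n, ∑ j : Fin n, h i.val j.val = ∑ i ∈ range n, ∑ j ∈ range n, h i j := by
  rw [← Fin.sum_univ_eq_sum_range (fun i => ∑ j ∈ range n, h i j) n]
  exact Finset.sum_congr rfl fun i _ => (Fin.sum_univ_eq_sum_range (h i.val) n)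

lemma eval_in_cnt (m n : ℕ) (hm : 2 ≤ m) (hn : n = 2*m) :
    (∑ i ∈ range n, ∑ j ∈ range n,
      (if i ≠ j ∧ ((i < m) ↔ (j < m)) then
        (if j = n-1 then (1:ℝ) else if i = n-1 then 1 else 1) else 0))
    = 2 * (1 * ((m:ℝ)-1)^2 + ∑ _i ∈ Ico m (n-1), (1:ℝ)) :=
  eval_in' m n hm hn 1 (fun _ => 1)

lemma eval_out_cnt (m n : ℕ) (hm : 2 ≤ m) (hn : n = 2*m) :
    (∑ i ∈ range n, ∑ j ∈ range n,
      (if ¬((i < m) ↔ (j < m)) then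
        (if j = n-1 then (1:ℝ) else if i = n-1 then 1 else 1) else 0))
    = 2 * (1 * ((m:ℝ)^2 - (m:ℝ)) + ∑ _i ∈ range m, (1:ℝ)) :=
  eval_out' m n hm hn 1 (fun _ => 1)

end Helpers

/-- For `n = 2m` nodes (`m ≥ 2`), with edge probability `p` between all
pairs among the first `n - 1` nodes and probability `qᵢ` between node `i` and the last
node, if the `q`-mass on the second community exceeds that on the first community, then
the balanced two-community assignment has `p̄_in > p̄_out`, with the explicit values
`p̄_in = (p(m-1)² + ∑_{i=m}^{n-2} qᵢ)/(m(m-1))` and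
`p̄_out = (p(m²-m) + ∑_{i=0}^{m-1} qᵢ)/m²` (indices written 0-based). -/
theorem induction_step_two_communities (m : ℕ) (hm : 2 ≤ m) (n : ℕ) (hn : n = 2 * m)
    (p : ℝ) (hp0 : 0 ≤ p) (hp1 : p ≤ 1)
    (q : ℕ → ℝ) (hq : ∀ i < n - 1, 0 ≤ q i ∧ q i ≤ 1)
    (P : Fin n → Fin n → ℝ)
    (hsym : ∀ i j, P i j = P j i) (hdiag : ∀ i, P i i = 0)
    (hPp : ∀ i j : Fin n, i ≠ j → i.val < n - 1 → j.val < n - 1 → P i j = p)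
    (hPq : ∀ i : Fin n, i.val < n - 1 → P i ⟨n - 1, by omega⟩ = q i.val)
    (c : Fin n → Fin 2) (hc : ∀ i : Fin n, c i = if i.val < m then 0 else 1)
    (hqsum : ∑ i ∈ Finset.range m, q i < ∑ i ∈ Finset.Ico m (n - 1), q i) :
    pbarOut c P < pbarIn c P ∧
      pbarIn c P = (p * ((m : ℝ) - 1) ^ 2 + ∑ i ∈ Finset.Ico m (n - 1), q i) /
        ((m : ℝ) * ((m : ℝ) - 1)) ∧
      pbarOut c P = (p * ((m : ℝ) ^ 2 - (m : ℝ)) + ∑ i ∈ Finset.range m, q i) /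
        (m : ℝ) ^ 2 := by
  classical
  have hmR : (2:ℝ) ≤ (m:ℝ) := by exact_mod_cast hm
  set A := ∑ i ∈ Finset.range m, q i with hA
  set B := ∑ i ∈ Finset.Ico m (n-1), q i with hB
  have hcc : ∀ i j : Fin n, (c i = c j) ↔ ((i.val < m) ↔ (j.val < m)) := by
    intro i j
    rw [hc i, hc j]
    by_cases h1 : i.val < m <;> by_cases h2 : j.val < m <;> simp [h1, h2]
  have Pval : ∀ i j : Fin n, i ≠ j →
      P i j = (if j.val = n-1 then q i.val else if i.val = n-1 then q j.val else p) := by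
    intro i j hij
    have hvij : i.val ≠ j.val := fun h => hij (Fin.val_injective h)
    by_cases hjL : j.val = n-1
    · rw [if_pos hjL]
      have hj' : j = ⟨n-1, by omega⟩ := Fin.ext hjL
      rw [hj']
      exact hPq i (by have := i.isLt; omega)
    · rw [if_neg hjL]
      by_cases hiL : i.val = n-1
      · rw [if_pos hiL]
        have hi' : i = ⟨n-1, by omega⟩ := Fin.ext hiL
        rw [hsym, hi']
        exact hPq j (by have := j.isLt; omega)
      · rw [if_neg hiL]
        exact hPp i j hij (by have := i.isLt; omega) (by have := j.isLt; omega)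
  -- key pointwise identities
  have keyIn : ∀ i j : Fin n, (if i ≠ j ∧ c i = c j then P i j else 0)
      = (fun a b : ℕ => if a ≠ b ∧ ((a < m) ↔ (b < m)) then
          (if b = n-1 then q a else if a = n-1 then q b else p) else 0) i.val j.val := by
    intro i j
    simp only
    by_cases hij : i = j
    · subst hij
      rw [if_neg (fun h => h.1 rfl), if_neg (fun h => h.1 rfl)]
    · have hvij : i.val ≠ j.val := fun h => hij (Fin.val_injective h)
      by_cases hcm : (i.val < m) ↔ (j.val < m)
      · rw [if_pos ⟨hij, (hcc i j).2 hcm⟩, if_pos ⟨hvij, hcm⟩]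
        exact Pval i j hij
      · rw [if_neg (fun h => hcm ((hcc i j).1 h.2)), if_neg (fun h => hcm h.2)]
  have keyOut : ∀ i j : Fin n, (if c i ≠ c j then P i j else 0)
      = (fun a b : ℕ => if ¬((a < m) ↔ (b < m)) then
          (if b = n-1 then q a else if a = n-1 then q b else p) else 0) i.val j.val := by
    intro i j
    simp only
    by_cases hcm : (i.val < m) ↔ (j.val < m)
    · rw [if_neg (fun h => h ((hcc i j).2 hcm)), if_neg (not_not_intro hcm)]
    · have hij : i ≠ j := fun h => hcm (by rw [h])
      rw [if_pos (fun h => hcm ((hcc i j).1 h)), if_pos hcm]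
      exact Pval i j hij
  have keyInC : ∀ i j : Fin n, (if i ≠ j ∧ c i = c j then (1:ℝ) else 0)
      = (fun a b : ℕ => if a ≠ b ∧ ((a < m) ↔ (b < m)) then
          (if b = n-1 then (1:ℝ) else if a = n-1 then 1 else 1) else 0) i.val j.val := by
    intro i j
    simp only [ite_self]
    refine if_congr ?_ rfl rfl
    constructor
    · rintro ⟨h1, h2⟩
      exact ⟨fun h => h1 (Fin.val_injective h), (hcc i j).1 h2⟩
    · rintro ⟨h1, h2⟩
      exact ⟨fun h => h1 (congrArg Fin.val h), (hcc i j).2 h2⟩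
  have keyOutC : ∀ i j : Fin n, (if c i ≠ c j then (1:ℝ) else 0)
      = (fun a b : ℕ => if ¬((a < m) ↔ (b < m)) then
          (if b = n-1 then (1:ℝ) else if a = n-1 then 1 else 1) else 0) i.val j.val := by
    intro i j
    simp only [ite_self]
    refine if_congr ?_ rfl rfl
    exact not_congr (hcc i j)
  have hcastm : ((n - 1 - m : ℕ) : ℝ) = (m:ℝ) - 1 := by
    have h : n - 1 - m = m - 1 := by omega
    rw [h, Nat.cast_sub (by omega : 1 ≤ m)]; norm_num
  -- set identification
  have hsetIn : Finset.univ.filter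
      (fun x : Fin n × Fin n => x.1 < x.2 ∧ (x.1 ≠ x.2 ∧ c x.1 = c x.2)) = pairsIn c := by
    ext x
    simp only [pairsIn, mem_filter, mem_univ, true_and]
    constructor
    · rintro ⟨h1, _, h3⟩; exact ⟨h1, h3⟩
    · rintro ⟨h1, h2⟩; exact ⟨h1, ne_of_lt h1, h2⟩
  have hsetOut : Finset.univ.filter
      (fun x : Fin n × Fin n => x.1 < x.2 ∧ c x.1 ≠ c x.2) = pairsOut c := rfl
  -- four computations
  have sIn : ∑ x ∈ pairsIn c, P x.1 x.2 = p * ((m:ℝ)-1)^2 + B := by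
    have h1 := double_count' (n := n) (fun i j => i ≠ j ∧ c i = c j)
      (fun i j h => ⟨h.1.symm, h.2.symm⟩) (fun i h => h.1 rfl) P hsym
    rw [hsetIn] at h1
    rw [Finset.sum_congr rfl (fun i _ => Finset.sum_congr rfl (fun j _ => keyIn i j)),
      fin_double_sum n (fun a b : ℕ => if a ≠ b ∧ ((a < m) ↔ (b < m)) then (if b = n-1 then q a else if a = n-1 then q b else p) else 0),
      eval_in' m n hm hn p q] at h1
    linarith
  have cIn : ((pairsIn c).card : ℝ) = (m:ℝ) * ((m:ℝ) - 1) := by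
    have h1 := double_count' (n := n) (fun i j => i ≠ j ∧ c i = c j)
      (fun i j h => ⟨h.1.symm, h.2.symm⟩) (fun i h => h.1 rfl) (fun _ _ => (1:ℝ)) (fun _ _ => rfl)
    rw [hsetIn] at h1
    rw [Finset.sum_congr rfl (fun i _ => Finset.sum_congr rfl (fun j _ => keyInC i j)),
      fin_double_sum n (fun a b : ℕ => if a ≠ b ∧ ((a < m) ↔ (b < m)) then (if b = n-1 then (1:ℝ) else if a = n-1 then 1 else 1) else 0),
      eval_in_cnt m n hm hn] at h1
    rw [Finset.sum_const, nsmul_eq_mul, mul_one] at h1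
    rw [Finset.sum_const, Nat.card_Ico, nsmul_eq_mul, mul_one, hcastm] at h1
    linarith
  have sOut : ∑ x ∈ pairsOut c, P x.1 x.2 = p * ((m:ℝ)^2 - (m:ℝ)) + A := by
    have h1 := double_count' (n := n) (fun i j => c i ≠ c j)
      (fun i j h => h.symm) (fun i h => h rfl) P hsym
    rw [hsetOut] at h1
    rw [Finset.sum_congr rfl (fun i _ => Finset.sum_congr rfl (fun j _ => keyOut i j)),
      fin_double_sum n (fun a b : ℕ => if ¬((a < m) ↔ (b < m)) then (if b = n-1 then q a else if a = n-1 then q b else p) else 0),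
      eval_out' m n hm hn p q] at h1
    linarith
  have cOut : ((pairsOut c).card : ℝ) = (m:ℝ)^2 := by
    have h1 := double_count' (n := n) (fun i j => c i ≠ c j)
      (fun i j h => h.symm) (fun i h => h rfl) (fun _ _ => (1:ℝ)) (fun _ _ => rfl)
    rw [hsetOut] at h1
    rw [Finset.sum_congr rfl (fun i _ => Finset.sum_congr rfl (fun j _ => keyOutC i j)),
      fin_double_sum n (fun a b : ℕ => if ¬((a < m) ↔ (b < m)) then (if b = n-1 then (1:ℝ) else if a = n-1 then 1 else 1) else 0),
      eval_out_cnt m n hm hn] at h1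
    rw [Finset.sum_const, nsmul_eq_mul, mul_one] at h1
    rw [Finset.sum_const, Finset.card_range, nsmul_eq_mul, mul_one] at h1
    linarith
  have hIn : pbarIn c P = (p * ((m:ℝ) - 1) ^ 2 + B) / ((m:ℝ) * ((m:ℝ) - 1)) := by
    rw [pbarIn, meanOver, sIn, cIn]
  have hOut : pbarOut c P = (p * ((m:ℝ)^2 - (m:ℝ)) + A) / (m:ℝ)^2 := by
    rw [pbarOut, meanOver, sOut, cOut]
  have hA0 : 0 ≤ A := by
    apply Finset.sum_nonneg
    intro i hi
    simp only [mem_range] at hi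
    exact (hq i (by omega)).1
  refine ⟨?_, hIn, hOut⟩
  rw [hIn, hOut]
  rw [div_lt_div_iff₀ (by positivity) (by nlinarith)]
  have h1 : A * ((m:ℝ) * ((m:ℝ) - 1)) ≤ A * (m:ℝ)^2 :=
    mul_le_mul_of_nonneg_left (by nlinarith) hA0
  have h2 : A * (m:ℝ)^2 < B * (m:ℝ)^2 :=
    mul_lt_mul_of_pos_right hqsum (by positivity)
  nlinarith [h1, h2]
end

section
/- Fix K ≥ 2, α ∈ (0,1), ε > 0 and β ∈ (0, 1/2]. For each n, let pₙ ∈ (0,1) with n·pₙ → ∞, and let μₙ be the Erdős–Rényi random graph measure on n nodes with edge probability pₙ (independent Bernoulli(pₙ) edges). Let 𝒞ₙ be any nonempty finite set of community assignments c : Fin n → Fin K such that every c ∈ 𝒞ₙ has at least β·n² intra-community pairs and at least β·n² inter-community pairs; put Nₙ = |𝒞ₙ| and Cₙ = ((1+ε)/pₙ) · sqrt( 2(log(2Nₙ) − log α) / (β n²) ). Then limsup_{n→∞} μₙ( max_{c ∈ 𝒞ₙ} T(c,A) > Cₙ ) ≤ α; that is, the test that rejects when max_{c ∈ 𝒞ₙ}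 T(c,A) exceeds Cₙ has asymptotic level at most α under the no-homophily (Erdős–Rényi) null hypothesis. -/
/-! Under the Erdős–Rényi null, `p̂` and every `p̂_in(c) − p̂_out(c)` are linear statistics of
independent Bernoulli edges, so Hoeffding's lemma gives sub-Gaussian tails:
`p̂_in(c) − p̂_out(c) ≥ t` has probability at most `exp(-β n² t²)` (the weights have squared norm
`1/#in + 1/#out ≤ 2/(β n²)`), and `p̂ ≤ p/(1+ε)` has probability at most
`exp(-4 β n² (pε/(1+ε))²)`. If `T(c, A) > Cₙ` and `p̂ > p/(1+ε)`, then
`p̂_in(c) − p̂_out(c) > √(2 (log (2N) − log α)/(β n²))`, an event of probability at most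
`α/(2N)`; a union bound over the `N` assignments gives `α/2`, while the probability that `p̂` is
small tends to `0` because `n p → ∞`. -/

open Finset

/-- A configuration of edge indicators, one Boolean per unordered pair `{i,j}` (encoded
as ordered pairs with `i < j`). -/
abbrev EdgeConfig (n : ℕ) := {p : Fin n × Fin n // p.1 < p.2} → Bool

/-- The (symmetric, zero-diagonal) adjacency function of an edge configuration, taking
values `0` or `1` in `ℝ`. -/
def adj {n : ℕ} (f : EdgeConfig n) (i j : Fin n) : ℝ :=
  if h : i < j then (if f ⟨(i, j), h⟩ then 1 else 0)
  else if h' : j < i then (if f ⟨(j, i), h'⟩ then 1 else 0)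
  else 0

/-- The product Bernoulli weight of an edge configuration under the edge-probability
matrix `P`: independent edges with `A i j ~ Bernoulli (P i j)` for `i < j`. -/
noncomputable def wt {n : ℕ} (P : Fin n → Fin n → ℝ) (f : EdgeConfig n) : ℝ :=
  ∏ e : {p : Fin n × Fin n // p.1 < p.2},
    (if f e then P e.1.1 e.1.2 else 1 - P e.1.1 e.1.2)

open Classical in
/-- Probability of an event under the product Bernoulli random graph measure with edge
probabilities `P`. -/
noncomputable def graphProb {n : ℕ} (P : Fin n → Fin n → ℝ)
    (E : EdgeConfig n → Prop) : ℝ :=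
  ∑ f ∈ Finset.univ.filter E, wt P f

/-- The test statistic `T(c, A)`, obtained by plugging the empirical means
`p̂_in, p̂_out, p̂` into the homophily formula; since `pbarIn`, `pbarOut` and `pbar`
are plain means, `T(c, A) = γ(c, adj f)` computed on the adjacency function. -/
noncomputable def Tstat {n K : ℕ} (c : Fin n → Fin K) (f : EdgeConfig n) : ℝ :=
  (pbarIn c (adj f) - pbarOut c (adj f)) / pbar (adj f)

/-- The Erdős–Rényi edge-probability matrix with constant edge probability `p`. -/
def erMatrix (n : ℕ) (p : ℝ) : Fin n → Fin n → ℝ :=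
  fun i j => if i = j then 0 else p


open Real Filter

abbrev Pair (n : ℕ) := {p : Fin n × Fin n // p.1 < p.2}

section GraphProb

variable {n : ℕ} {P : Fin n → Fin n → ℝ}

lemma adj_pair (f : EdgeConfig n) (e : Pair n) :
    adj f e.1.1 e.1.2 = if f e then 1 else 0 := by
  rw [adj, dif_pos e.2]

lemma IsEdgeProbMatrix.mem_Icc (hP : IsEdgeProbMatrix P) (e : Pair n) :
    P e.1.1 e.1.2 ∈ Set.Icc 0 1 :=
  hP.2.2 _ _ e.2.ne

lemma isEdgeProbMatrix_erMatrix {p : ℝ} (hp : p ∈ Set.Icc 0 1) :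
    IsEdgeProbMatrix (erMatrix n p) := by
  refine ⟨fun i j => ?_, fun i => if_pos rfl, fun i j hij => ?_⟩
  · simp only [erMatrix, eq_comm]
  · simpa [erMatrix, hij] using hp

lemma wt_nonneg (hP : IsEdgeProbMatrix P) (f : EdgeConfig n) : 0 ≤ wt P f :=
  prod_nonneg fun e _ => by
    have := hP.mem_Icc e
    split_ifs <;> linarith [this.1, this.2]

lemma graphProb_nonneg (hP : IsEdgeProbMatrix P) (E : EdgeConfig n → Prop) :
    0 ≤ graphProb P E :=
  sum_nonneg fun f _ => wt_nonneg hP f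

lemma graphProb_mono (hP : IsEdgeProbMatrix P) {E F : EdgeConfig n → Prop}
    (h : ∀ f, E f → F f) : graphProb P E ≤ graphProb P F := by
  classical
  exact sum_le_sum_of_subset_of_nonneg (monotone_filter_right _ fun f _ => h f)
    fun f _ _ => wt_nonneg hP f

lemma graphProb_le_sum_wt_mul (hP : IsEdgeProbMatrix P) {E : EdgeConfig n → Prop}
    {g : EdgeConfig n → ℝ} (hg : ∀ f, 0 ≤ g f) (hE : ∀ f, E f → 1 ≤ g f) :
    graphProb P E ≤ ∑ f, wt P f * g f := by
  classical
  calc graphProb P E ≤ ∑ f ∈ univ.filter E, wt P f * g f :=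
        sum_le_sum fun f hf => le_mul_of_one_le_right (wt_nonneg hP f) (hE f (mem_filter.1 hf).2)
    _ ≤ ∑ f, wt P f * g f :=
        sum_le_sum_of_subset_of_nonneg (subset_univ _)
          fun f _ _ => mul_nonneg (wt_nonneg hP f) (hg f)

open Classical in
lemma graphProb_eq_sum_wt_mul_ite (E : EdgeConfig n → Prop) :
    graphProb P E = ∑ f, wt P f * if E f then 1 else 0 := by
  simp only [mul_ite, mul_one, mul_zero, graphProb, sum_filter]

lemma graphProb_or_le (hP : IsEdgeProbMatrix P) (E F : EdgeConfig n → Prop) :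
    graphProb P (fun f => E f ∨ F f) ≤ graphProb P E + graphProb P F := by
  classical
  rw [graphProb_eq_sum_wt_mul_ite E, graphProb_eq_sum_wt_mul_ite F, ← sum_add_distrib]
  simp_rw [← mul_add]
  exact graphProb_le_sum_wt_mul hP (fun f => by positivity)
    fun f hf => by rcases hf with h | h <;> split_ifs <;> simp_all

lemma graphProb_exists_le (hP : IsEdgeProbMatrix P) {ι : Type*} (s : Finset ι)
    (Q : ι → EdgeConfig n → Prop) :
    graphProb P (fun f => ∃ c ∈ s, Q c f) ≤ ∑ c ∈ s, graphProb P (Q c) := by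
  classical
  simp_rw [graphProb_eq_sum_wt_mul_ite (Q _)]
  rw [sum_comm]
  simp_rw [← mul_sum]
  refine graphProb_le_sum_wt_mul hP (fun f => sum_nonneg fun c _ => by positivity) ?_
  rintro f ⟨c, hc, hQ⟩
  calc (1 : ℝ) = if Q c f then 1 else 0 := (if_pos hQ).symm
    _ ≤ ∑ c ∈ s, if Q c f then 1 else 0 :=
        single_le_sum (f := fun c => if Q c f then (1 : ℝ) else 0)
          (fun c _ => by positivity) hc

end GraphProb

section Chernoff

variable {n : ℕ} {P : Fin n → Fin n → ℝ}

open ProbabilityTheory MeasureTheory in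
lemma bernoulli_mgf_le {q : ℝ} (hq : q ∈ Set.Icc 0 1) (u : ℝ) :
    q * exp u + (1 - q) ≤ exp (q * u + u ^ 2 / 8) := by
  set X : Bool → ℝ := fun b => if b then 1 else 0
  have hoeffding := (hasSubgaussianMGF_of_mem_Icc
    (μ := bernoulliMeasure true false ⟨q, hq⟩) (X := X) (a := 0) (b := 1)
    Measurable.of_discrete.aemeasurable
    (ae_of_all _ fun b => by cases b <;> simp [X])).mgf_le u
  simp only [mgf, integral_bernoulliMeasure, X] at hoeffding
  norm_num at hoeffding
  calc q * exp u + (1 - q)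
      = exp (q * u) * (q * exp (u * (1 - q)) + (1 - q) * exp (-(u * q))) := by
        rw [mul_add, mul_left_comm, ← exp_add, mul_left_comm, ← exp_add]
        ring_nf
        simp only [exp_zero]
        ring
    _ ≤ exp (q * u) * exp (u ^ 2 / 8) := by
        gcongr
        refine hoeffding.trans_eq ?_
        ring_nf
    _ = exp (q * u + u ^ 2 / 8) := (exp_add _ _).symm

lemma sum_wt_mul_exp (a : Pair n → ℝ) :
    ∑ f : EdgeConfig n, wt P f * exp (∑ e, a e * adj f e.1.1 e.1.2)
      = ∏ e : Pair n, (P e.1.1 e.1.2 * exp (a e) + (1 - P e.1.1 e.1.2)) := by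
  classical
  have factor : ∀ f : EdgeConfig n, wt P f * exp (∑ e, a e * adj f e.1.1 e.1.2)
      = ∏ e, (if f e then P e.1.1 e.1.2 * exp (a e) else 1 - P e.1.1 e.1.2) := by
    intro f
    rw [wt, exp_sum, ← prod_mul_distrib]
    refine prod_congr rfl fun e _ => ?_
    by_cases hfe : f e <;> simp [hfe, adj_pair]
  simp_rw [factor, Fintype.prod_sum (fun e (b : Bool) =>
    if b then P e.1.1 e.1.2 * exp (a e) else 1 - P e.1.1 e.1.2) |>.symm, Fintype.sum_bool]
  simp

/-- The exponential Markov inequality for `∑ₑ aₑ Aₑ`, with Hoeffding's lemma bounding each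
factor of the moment generating function. -/
lemma graphProb_sum_ge_le_exp_mul (hP : IsEdgeProbMatrix P) (a : Pair n → ℝ) (t : ℝ)
    {l : ℝ} (hl : 0 ≤ l) :
    graphProb P (fun f => ∑ e, a e * P e.1.1 e.1.2 + t ≤ ∑ e, a e * adj f e.1.1 e.1.2)
      ≤ exp (-(l * t) + l ^ 2 * (∑ e, a e ^ 2) / 8) := by
  set m := ∑ e, a e * P e.1.1 e.1.2
  calc _ ≤ ∑ f : EdgeConfig n, wt P f * exp (l * (∑ e, a e * adj f e.1.1 e.1.2 - (m + t))) :=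
        graphProb_le_sum_wt_mul hP (fun f => (exp_pos _).le) fun f hf =>
          one_le_exp (mul_nonneg hl (by linarith))
    _ = exp (-(l * (m + t))) * ∏ e, (P e.1.1 e.1.2 * exp (l * a e) + (1 - P e.1.1 e.1.2)) := by
        rw [← sum_wt_mul_exp, mul_sum]
        refine sum_congr rfl fun f _ => ?_
        rw [mul_left_comm, ← exp_add, mul_sub, mul_sum]
        congr 2
        simp only [mul_assoc]
        ring
    _ ≤ exp (-(l * (m + t))) * ∏ e, exp (P e.1.1 e.1.2 * (l * a e) + (l * a e) ^ 2 / 8) := by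
        refine mul_le_mul_of_nonneg_left (prod_le_prod (fun e _ => ?_)
          fun e _ => bernoulli_mgf_le (hP.mem_Icc e) _) (exp_pos _).le
        nlinarith [(hP.mem_Icc e).1, (hP.mem_Icc e).2, exp_pos (l * a e)]
    _ = exp (-(l * t) + l ^ 2 * (∑ e, a e ^ 2) / 8) := by
        have hlin : ∑ e, P e.1.1 e.1.2 * (l * a e) = l * m := by
          rw [mul_sum]; exact sum_congr rfl fun e _ => by ring
        have hsq : ∑ e, (l * a e) ^ 2 = l ^ 2 * ∑ e, a e ^ 2 := by
          rw [mul_sum]; exact sum_congr rfl fun e _ => by ring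
        rw [← exp_sum, ← exp_add, sum_add_distrib, ← sum_div, hlin, hsq]
        ring_nf

theorem graphProb_sum_ge_le (hP : IsEdgeProbMatrix P) (a : Pair n → ℝ) {t : ℝ} (ht : 0 < t) :
    graphProb P (fun f => ∑ e, a e * P e.1.1 e.1.2 + t ≤ ∑ e, a e * adj f e.1.1 e.1.2)
      ≤ exp (-2 * t ^ 2 / ∑ e, a e ^ 2) := by
  rcases (sum_nonneg fun e _ => sq_nonneg (a e) : 0 ≤ ∑ e, a e ^ 2).eq_or_lt with hσ | hσ
  · have ha : ∀ e, a e = 0 := fun e => pow_eq_zero_iff two_ne_zero |>.1 <|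
      (sum_eq_zero_iff_of_nonneg fun e _ => sq_nonneg (a e)).1 hσ.symm e (mem_univ e)
    refine (graphProb_le_sum_wt_mul hP (g := 0) (fun _ => le_rfl) fun f hf => ?_).trans ?_
    · simp only [ha, zero_mul, sum_const_zero, zero_add] at hf
      linarith
    · simpa using (exp_pos _).le
  · -- the exponent `-l t + l² σ / 8` is minimal at `l = 4 t / σ`
    refine (graphProb_sum_ge_le_exp_mul hP a t (l := 4 * t / ∑ e, a e ^ 2)
      (by positivity)).trans_eq (congrArg exp ?_)
    field_simp
    ring

end Chernoff

section MeanWeight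

variable {n : ℕ}

noncomputable def meanWeight (S : Finset (Fin n × Fin n)) (e : Pair n) : ℝ :=
  if e.1 ∈ S then (#S : ℝ)⁻¹ else 0

lemma sum_pair_ite_mem {S : Finset (Fin n × Fin n)} (hS : S ⊆ allPairs n)
    (g : Fin n × Fin n → ℝ) :
    ∑ e : Pair n, (if e.1 ∈ S then g e.1 else 0) = ∑ x ∈ S, g x := by
  classical
  rw [← sum_subtype (allPairs n) (fun x => by simp [allPairs]) (fun x => if x ∈ S then g x else 0),
    sum_ite_mem, inter_eq_right.2 hS]

lemma meanOver_eq_sum_meanWeight {S : Finset (Fin n × Fin n)} (hS : S ⊆ allPairs n)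
    (Q : Fin n → Fin n → ℝ) :
    meanOver S Q = ∑ e, meanWeight S e * Q e.1.1 e.1.2 := by
  simp only [meanWeight, ite_mul, zero_mul]
  rw [sum_pair_ite_mem hS (fun x => (#S : ℝ)⁻¹ * Q x.1 x.2), ← mul_sum, meanOver,
    div_eq_inv_mul]

lemma sum_meanWeight_sq {S : Finset (Fin n × Fin n)} (hS : S ⊆ allPairs n) :
    ∑ e, meanWeight S e ^ 2 = (#S : ℝ)⁻¹ := by
  simp only [meanWeight, ite_pow, zero_pow two_ne_zero]
  rw [sum_pair_ite_mem hS (fun _ => (#S : ℝ)⁻¹ ^ 2), sum_const, nsmul_eq_mul]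
  rcases eq_or_ne (#S : ℝ) 0 with h | h
  · simp [h]
  · field_simp

lemma meanWeight_mul_meanWeight_of_disjoint {S T : Finset (Fin n × Fin n)}
    (h : Disjoint S T) (e : Pair n) : meanWeight S e * meanWeight T e = 0 := by
  unfold meanWeight
  split_ifs with hS hT
  exacts [absurd hT (disjoint_left.1 h hS), mul_zero _, zero_mul _, zero_mul _]

end MeanWeight

section Communities

variable {n K : ℕ}

lemma pairsIn_subset_allPairs (c : Fin n → Fin K) : pairsIn c ⊆ allPairs n :=
  fun x hx => by simp_all [pairsIn, allPairs]

lemma pairsOut_subset_allPairs (c : Fin n → Fin K) : pairsOut c ⊆ allPairs n :=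
  fun x hx => by simp_all [pairsOut, allPairs]

lemma disjoint_pairsIn_pairsOut (c : Fin n → Fin K) : Disjoint (pairsIn c) (pairsOut c) :=
  disjoint_filter.2 fun _ _ h h' => h'.2 h.2

lemma card_pairsIn_add_card_pairsOut (c : Fin n → Fin K) :
    #(pairsIn c) + #(pairsOut c) = #(allPairs n) := by
  rw [← card_union_of_disjoint (disjoint_pairsIn_pairsOut c)]
  congr 1
  ext x
  simp only [pairsIn, pairsOut, allPairs, mem_union, mem_filter, mem_univ, true_and]
  tauto

end Communities

section Tails

variable {n K : ℕ} {P : Fin n → Fin n → ℝ}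

theorem graphProb_pbar_le_sub_le (hP : IsEdgeProbMatrix P) {s : ℝ} (hs : 0 < s) :
    graphProb P (fun f => pbar (adj f) ≤ pbar P - s)
      ≤ exp (-2 * s ^ 2 * #(allPairs n)) := by
  have hpbar : ∀ Q : Fin n → Fin n → ℝ, pbar Q = ∑ e, meanWeight (allPairs n) e * Q e.1.1 e.1.2 :=
    meanOver_eq_sum_meanWeight subset_rfl
  refine (graphProb_mono hP fun f hf => ?_).trans
    ((graphProb_sum_ge_le hP (fun e => -meanWeight (allPairs n) e) hs).trans_eq ?_)
  · simp only [neg_mul, sum_neg_distrib, ← hpbar]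
    linarith
  · simp only [neg_sq, sum_meanWeight_sq subset_rfl, div_inv_eq_mul]

theorem graphProb_homophily_ge_add_le (hP : IsEdgeProbMatrix P) (c : Fin n → Fin K)
    {t : ℝ} (ht : 0 < t) :
    graphProb P (fun f => pbarIn c P - pbarOut c P + t ≤ pbarIn c (adj f) - pbarOut c (adj f))
      ≤ exp (-2 * t ^ 2 / ((#(pairsIn c) : ℝ)⁻¹ + (#(pairsOut c) : ℝ)⁻¹)) := by
  set a : Pair n → ℝ := fun e => meanWeight (pairsIn c) e - meanWeight (pairsOut c) e
  have hdiff : ∀ Q : Fin n → Fin n → ℝ,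
      pbarIn c Q - pbarOut c Q = ∑ e, a e * Q e.1.1 e.1.2 := fun Q => by
    simp only [pbarIn, pbarOut, meanOver_eq_sum_meanWeight (pairsIn_subset_allPairs c),
      meanOver_eq_sum_meanWeight (pairsOut_subset_allPairs c), a, sub_mul, sum_sub_distrib]
  have hsq : ∑ e, a e ^ 2 = (#(pairsIn c) : ℝ)⁻¹ + (#(pairsOut c) : ℝ)⁻¹ := by
    simp only [a, sub_sq, sum_add_distrib, mul_assoc,
      meanWeight_mul_meanWeight_of_disjoint (disjoint_pairsIn_pairsOut c), mul_zero, sub_zero,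
      sum_meanWeight_sq (pairsIn_subset_allPairs c),
      sum_meanWeight_sq (pairsOut_subset_allPairs c)]
  simp only [hdiff, ← hsq]
  exact graphProb_sum_ge_le hP a ht

end Tails

section ErdosRenyi

variable {n K : ℕ} {p : ℝ}

lemma meanOver_erMatrix {S : Finset (Fin n × Fin n)} (hS : S ⊆ allPairs n) (hne : S.Nonempty) :
    meanOver S (erMatrix n p) = p := by
  have hoff : ∀ x ∈ S, erMatrix n p x.1 x.2 = p := fun x hx =>
    if_neg (mem_filter.1 (hS hx)).2.ne
  rw [meanOver, sum_congr rfl hoff, sum_const, nsmul_eq_mul,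
    mul_div_cancel_left₀ _ (Nat.cast_ne_zero.2 hne.card_pos.ne')]

lemma nonempty_of_le_card {S : Finset (Fin n × Fin n)} {m : ℝ} (hm : 0 < m) (h : m ≤ #S) :
    S.Nonempty :=
  card_pos.1 (Nat.cast_pos.1 (hm.trans_le h))

theorem erdosRenyi_pbar_le_sub_le (hp : p ∈ Set.Icc 0 1) {c : Fin n → Fin K} {m : ℝ}
    (hm : 0 < m) (hIn : m ≤ #(pairsIn c)) (hOut : m ≤ #(pairsOut c)) {s : ℝ} (hs : 0 < s) :
    graphProb (erMatrix n p) (fun f => pbar (adj f) ≤ p - s) ≤ exp (-(4 * m * s ^ 2)) := by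
  have hpairs : 2 * m ≤ #(allPairs n) := by
    rw [← card_pairsIn_add_card_pairsOut c, Nat.cast_add]
    linarith
  have := graphProb_pbar_le_sub_le (isEdgeProbMatrix_erMatrix (n := n) hp) hs
  rw [pbar, meanOver_erMatrix subset_rfl (nonempty_of_le_card (by linarith) hpairs)] at this
  exact this.trans (exp_le_exp.2 (by nlinarith))

theorem erdosRenyi_homophily_ge_le (hp : p ∈ Set.Icc 0 1) {c : Fin n → Fin K} {m : ℝ}
    (hm : 0 < m) (hIn : m ≤ #(pairsIn c)) (hOut : m ≤ #(pairsOut c)) {t : ℝ} (ht : 0 < t) :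
    graphProb (erMatrix n p) (fun f => t ≤ pbarIn c (adj f) - pbarOut c (adj f))
      ≤ exp (-(m * t ^ 2)) := by
  have := graphProb_homophily_ge_add_le (isEdgeProbMatrix_erMatrix hp) c ht
  rw [pbarIn, pbarOut, meanOver_erMatrix (pairsIn_subset_allPairs c) (nonempty_of_le_card hm hIn),
    meanOver_erMatrix (pairsOut_subset_allPairs c) (nonempty_of_le_card hm hOut)] at this
  simp only [sub_self, zero_add] at this
  refine this.trans (exp_le_exp.2 ?_)
  have hvar_pos : 0 < (#(pairsIn c) : ℝ)⁻¹ + (#(pairsOut c) : ℝ)⁻¹ := by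
    have := hm.trans_le hIn
    positivity
  rw [neg_mul, neg_div, neg_le_neg_iff, le_div_iff₀ hvar_pos]
  calc m * t ^ 2 * ((#(pairsIn c) : ℝ)⁻¹ + (#(pairsOut c) : ℝ)⁻¹)
      ≤ m * t ^ 2 * (m⁻¹ + m⁻¹) := by gcongr
    _ = 2 * t ^ 2 := by field_simp; ring

theorem erdosRenyi_exists_homophily_ge_le (hp : p ∈ Set.Icc 0 1) {𝒞 : Finset (Fin n → Fin K)}
    {m : ℝ} (hm : 0 < m) (h𝒞 : ∀ c ∈ 𝒞, m ≤ #(pairsIn c) ∧ m ≤ #(pairsOut c))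
    {t : ℝ} (ht : 0 < t) :
    graphProb (erMatrix n p) (fun f => ∃ c ∈ 𝒞, t ≤ pbarIn c (adj f) - pbarOut c (adj f))
      ≤ #𝒞 * exp (-(m * t ^ 2)) := by
  refine (graphProb_exists_le (isEdgeProbMatrix_erMatrix hp) _ _).trans ?_
  rw [← nsmul_eq_mul, ← sum_const]
  exact sum_le_sum fun c hc => erdosRenyi_homophily_ge_le hp hm (h𝒞 c hc).1 (h𝒞 c hc).2 ht

end ErdosRenyi

lemma pbar_le_or_le_of_div_lt_Tstat {n K : ℕ} {c : Fin n → Fin K} {f : EdgeConfig n} {b t : ℝ}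
    (hb : 0 < b) (ht : 0 ≤ t) (h : t / b < Tstat c f) :
    pbar (adj f) ≤ b ∨ t ≤ pbarIn c (adj f) - pbarOut c (adj f) := by
  refine (le_or_gt _ b).imp_right fun hpbar => ?_
  have hpos := hb.trans hpbar
  rw [Tstat, div_lt_div_iff₀ hb hpos] at h
  nlinarith

theorem erdosRenyi_exists_Tstat_gt_le {n K : ℕ} {𝒞 : Finset (Fin n → Fin K)}
    (h𝒞ne : 𝒞.Nonempty) {p α ε m : ℝ} (hp0 : 0 < p) (hp1 : p ≤ 1) (hα0 : 0 < α) (hα1 : α < 1)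
    (hε : 0 < ε) (hm : 0 < m) (h𝒞 : ∀ c ∈ 𝒞, m ≤ #(pairsIn c) ∧ m ≤ #(pairsOut c)) :
    graphProb (erMatrix n p) (fun f => ∃ c ∈ 𝒞,
        ((1 + ε) / p) * sqrt (2 * (log (2 * (#𝒞 : ℝ)) - log α) / m) < Tstat c f)
      ≤ α / 2 + exp (-(4 * m * (p * ε / (1 + ε)) ^ 2)) := by
  have hp : p ∈ Set.Icc 0 1 := ⟨hp0.le, hp1⟩
  have hN : (1 : ℝ) ≤ #𝒞 := Nat.one_le_cast.2 h𝒞ne.card_pos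
  set L := log (2 * (#𝒞 : ℝ)) - log α
  have hL : 0 < L := by linarith [log_neg hα0 hα1, log_pos (by linarith : (1 : ℝ) < 2 * #𝒞)]
  set t := sqrt (2 * L / m)
  have ht : 0 < t := sqrt_pos.2 (by positivity)
  have hmt : m * t ^ 2 = 2 * L := by
    rw [sq_sqrt (by positivity)]
    field_simp
  set s := p * ε / (1 + ε)
  have hs : 0 < s := by positivity
  have hps : p - s = p / (1 + ε) := by
    simp only [s]
    field_simp
    ring
  have hincl : ∀ f, (∃ c ∈ 𝒞, (1 + ε) / p * t < Tstat c f) →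
      pbar (adj f) ≤ p - s ∨ ∃ c ∈ 𝒞, t ≤ pbarIn c (adj f) - pbarOut c (adj f) := by
    rintro f ⟨c, hc, hT⟩
    rw [hps]
    refine (pbar_le_or_le_of_div_lt_Tstat (by positivity) ht.le ?_).imp_right fun h => ⟨c, hc, h⟩
    rwa [div_div_eq_mul_div, mul_comm, mul_div_right_comm]
  obtain ⟨c₀, hc₀⟩ := h𝒞ne
  calc _ ≤ graphProb (erMatrix n p) (fun f => pbar (adj f) ≤ p - s ∨
          ∃ c ∈ 𝒞, t ≤ pbarIn c (adj f) - pbarOut c (adj f)) :=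
        graphProb_mono (isEdgeProbMatrix_erMatrix hp) hincl
    _ ≤ exp (-(4 * m * s ^ 2)) + #𝒞 * exp (-(m * t ^ 2)) :=
        (graphProb_or_le (isEdgeProbMatrix_erMatrix hp) _ _).trans <| add_le_add
          (erdosRenyi_pbar_le_sub_le hp hm (h𝒞 c₀ hc₀).1 (h𝒞 c₀ hc₀).2 hs)
          (erdosRenyi_exists_homophily_ge_le hp hm h𝒞 ht)
    _ ≤ exp (-(4 * m * s ^ 2)) + #𝒞 * exp (-L) := by gcongr; linarith
    _ = α / 2 + exp (-(4 * m * s ^ 2)) := by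
        rw [neg_sub, exp_sub, exp_log hα0, exp_log (by positivity)]
        field_simp
        ring

theorem asymptotic_level_of_test_general (K : ℕ)
    (α : ℝ) (hα0 : 0 < α) (hα1 : α < 1)
    (ε : ℝ) (hε : 0 < ε)
    (β : ℝ) (hβ0 : 0 < β)
    (p : ℕ → ℝ) (hp : ∀ n, 0 < p n ∧ p n < 1)
    (hnp : Filter.Tendsto (fun n : ℕ => (n : ℝ) * p n) Filter.atTop Filter.atTop)
    (𝒞 : ∀ n : ℕ, Finset (Fin n → Fin K))
    (h𝒞ne : ∀ n, (𝒞 n).Nonempty)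
    (h𝒞 : ∀ n, ∀ c ∈ 𝒞 n,
      β * (n : ℝ) ^ 2 ≤ (pairsIn c).card ∧ β * (n : ℝ) ^ 2 ≤ (pairsOut c).card) :
    Filter.limsup
      (fun n : ℕ => graphProb (erMatrix n (p n))
        (fun f : EdgeConfig n => ∃ c ∈ 𝒞 n,
          ((1 + ε) / p n) *
            Real.sqrt (2 * (Real.log (2 * ((𝒞 n).card : ℝ)) - Real.log α) /
              (β * (n : ℝ) ^ 2)) < Tstat c f))
      Filter.atTop ≤ α := by
  have herror : Tendsto (fun n : ℕ => exp (-(4 * (β * n ^ 2) * (p n * ε / (1 + ε)) ^ 2)))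
      atTop (nhds 0) := by
    refine tendsto_exp_neg_atTop_nhds_zero.comp <|
      ((tendsto_pow_atTop two_ne_zero).comp hnp).const_mul_atTop
        (by positivity : 0 < 4 * β * (ε / (1 + ε)) ^ 2) |>.congr fun n => ?_
    simp only [Function.comp_apply]
    ring
  refine limsup_le_of_le (isCoboundedUnder_le_of_le atTop fun n =>
    graphProb_nonneg (isEdgeProbMatrix_erMatrix ⟨(hp n).1.le, (hp n).2.le⟩) _) ?_
  filter_upwards [herror.eventually_lt_const (half_pos hα0), eventually_ge_atTop 1] with n hsmall hn
  refine (erdosRenyi_exists_Tstat_gt_le (h𝒞ne n) (hp n).1 (hp n).2.le hα0 hα1 hε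
    (by positivity) (h𝒞 n)).trans ?_
  linarith

/-- Under the Erdős–Rényi null, the test rejecting when
`max_{c ∈ 𝒞ₙ} T(c,A)` exceeds the threshold
`Cₙ = ((1+ε)/pₙ)·√(2(log(2Nₙ) − log α)/(β n²))` has asymptotic level at most `α`. -/
theorem asymptotic_level_of_test (K : ℕ) (hK : 2 ≤ K)
    (α : ℝ) (hα0 : 0 < α) (hα1 : α < 1)
    (ε : ℝ) (hε : 0 < ε)
    (β : ℝ) (hβ0 : 0 < β) (hβ1 : β ≤ 1 / 2)
    (p : ℕ → ℝ) (hp : ∀ n, 0 < p n ∧ p n < 1)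
    (hnp : Filter.Tendsto (fun n : ℕ => (n : ℝ) * p n) Filter.atTop Filter.atTop)
    (𝒞 : ∀ n : ℕ, Finset (Fin n → Fin K))
    (h𝒞ne : ∀ n, (𝒞 n).Nonempty)
    (h𝒞 : ∀ n, ∀ c ∈ 𝒞 n,
      β * (n : ℝ) ^ 2 ≤ (pairsIn c).card ∧ β * (n : ℝ) ^ 2 ≤ (pairsOut c).card) :
    Filter.limsup
      (fun n : ℕ => graphProb (erMatrix n (p n))
        (fun f : EdgeConfig n => ∃ c ∈ 𝒞 n,
          ((1 + ε) / p n) *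
            Real.sqrt (2 * (Real.log (2 * ((𝒞 n).card : ℝ)) - Real.log α) /
              (β * (n : ℝ) ^ 2)) < Tstat c f))
      Filter.atTop ≤ α :=
  asymptotic_level_of_test_general K α hα0 hα1 ε hε β hβ0 p hp hnp 𝒞 h𝒞ne h𝒞
end

section
/- Let I and O be disjoint nonempty finite index sets with |I| = m_in and |O| = m_out, and let (B_e)_{e ∈ I ∪ O} be independent Bernoulli random variables with means (π_e). Let p̄_in = (1/m_in) ∑_{e∈I} π_e, p̄_out = (1/m_out) ∑_{e∈O} π_e, p̂_in = (1/m_in) ∑_{e∈I} B_e, and p̂_out = (1/m_out) ∑_{e∈O} B_e. If 0 ≤ k < Δ where Δ = p̄_in − p̄_out > 0, then P( p̂_in − p̂_out ≤ k ) ≤ 2 exp( −m_in (Δ − k)² / 2 ) + 2 exp( −m_out (Δ − k)² / 2 ). -/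
/-!
If `p̂_in − p̂_out ≤ k`, then either `p̂_in` lies at least `t = (Δ − k)/2` below `p̄_in` or
`p̂_out` lies at least `t` above `p̄_out`. The weights in the statement are those of the product
of the Bernoulli measures `Ber(π_e)` on `ι → Bool`, under which the edge indicators are
independent and `[0, 1]`-valued; by Hoeffding's inequality each of the two deviations of a sum
over `m` indicators has probability at most `exp (-2 m t²)`.
-/

open Finset MeasureTheory ProbabilityTheory

section Hoeffding

variable {Ω ι : Type*} {mΩ : MeasurableSpace Ω} {μ : Measure Ω} [IsProbabilityMeasure μ]
  {X : ι → Ω → ℝ}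

lemma hasSubgaussianMGF_sum_sub_integral_of_mem_Icc (h_indep : iIndepFun X μ)
    (hm : ∀ i, Measurable (X i)) (hX : ∀ i ω, X i ω ∈ Set.Icc 0 1) (s : Finset ι) :
    HasSubgaussianMGF (fun ω ↦ ∑ i ∈ s, (X i ω - μ[X i])) (#s / 4) μ := by
  have h_indep' : iIndepFun (fun i ω ↦ X i ω - μ[X i]) μ := by
    exact h_indep.comp (fun i (y : ℝ) ↦ y - μ[X i]) fun i ↦ measurable_id.sub_const _
  have h_subG : ∀ i ∈ s, HasSubgaussianMGF (fun ω ↦ X i ω - μ[X i]) (1 / 4) μ := fun i _ ↦ by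
    have h := hasSubgaussianMGF_of_mem_Icc (hm i).aemeasurable (ae_of_all μ (hX i))
    norm_num at h
    exact h
  convert HasSubgaussianMGF.sum_of_iIndepFun h_indep' h_subG using 1
  simp [div_eq_mul_inv]

lemma measureReal_le_sum_sub_integral_ge_le (h_indep : iIndepFun X μ)
    (hm : ∀ i, Measurable (X i)) (hX : ∀ i ω, X i ω ∈ Set.Icc 0 1) (s : Finset ι)
    {t : ℝ} (ht : 0 ≤ t) :
    μ.real {ω | #s * t ≤ ∑ i ∈ s, (X i ω - μ[X i])} ≤ Real.exp (-2 * #s * t ^ 2) := by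
  refine ((hasSubgaussianMGF_sum_sub_integral_of_mem_Icc h_indep hm hX s).measure_ge_le
    (by positivity)).trans_eq ?_
  congr 1
  rcases eq_or_ne (#s : ℝ) 0 with hs | hs
  · simp [hs]
  · push_cast; field_simp; ring

lemma measureReal_sum_sub_integral_le_neg_le (h_indep : iIndepFun X μ)
    (hm : ∀ i, Measurable (X i)) (hX : ∀ i ω, X i ω ∈ Set.Icc 0 1) (s : Finset ι)
    {t : ℝ} (ht : 0 ≤ t) :
    μ.real {ω | ∑ i ∈ s, (X i ω - μ[X i]) ≤ -(#s * t)} ≤ Real.exp (-2 * #s * t ^ 2) := by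
  have h := (hasSubgaussianMGF_sum_sub_integral_of_mem_Icc h_indep hm hX s).neg.measure_ge_le
    (ε := #s * t) (by positivity)
  simp only [Pi.neg_apply, le_neg] at h
  refine h.trans_eq ?_
  congr 1
  rcases eq_or_ne (#s : ℝ) 0 with hs | hs
  · simp [hs]
  · push_cast; field_simp; ring

end Hoeffding

lemma sub_le_neg_or_le_sub_of_div_sub_div_le {a b α β m n t : ℝ} (hm : 0 < m) (hn : 0 < n)
    (h : a / m - b / n + 2 * t ≤ α / m - β / n) : a - α ≤ -(m * t) ∨ n * t ≤ b - β := by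
  by_contra! ⟨ha, hb⟩
  have ha' : -t < a / m - α / m := by rw [← sub_div, lt_div_iff₀ hm]; linarith
  have hb' : b / n - β / n < t := by rw [← sub_div, div_lt_iff₀ hn]; linarith
  linarith

lemma measureReal_pi_finset_eq_sum_prod {ι : Type*} [Fintype ι] {α : ι → Type*}
    [∀ i, MeasurableSpace (α i)] [∀ i, MeasurableSingletonClass (α i)] (μ : ∀ i, Measure (α i))
    [∀ i, IsFiniteMeasure (μ i)] (s : Finset (∀ i, α i)) :
    (Measure.pi μ).real s = ∑ f ∈ s, ∏ i, (μ i).real {f i} := by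
  rw [← sum_measureReal_singleton]
  simp [measureReal_def, ENNReal.toReal_prod]

lemma bernoulliMeasure_real_singleton (p : unitInterval) (b : Bool) :
    Ber(true, false, p).real {b} = if b then (p : ℝ) else 1 - p := by
  cases b <;> simp

lemma ite_one_zero_mem_Icc (b : Bool) : (if b then (1 : ℝ) else 0) ∈ Set.Icc 0 1 := by
  cases b <;> simp

section BernoulliProduct

variable {ι : Type*} [Fintype ι] (p : ι → unitInterval)

noncomputable def bernoulliPi : Measure (ι → Bool) :=
  Measure.pi fun e ↦ Ber(true, false, p e)

instance : IsProbabilityMeasure (bernoulliPi p) := by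
  unfold bernoulliPi
  infer_instance

lemma bernoulliPi_real_finset (s : Finset (ι → Bool)) :
    (bernoulliPi p).real s = ∑ f ∈ s, ∏ e, (if f e then (p e : ℝ) else 1 - p e) := by
  simp only [bernoulliPi, measureReal_pi_finset_eq_sum_prod, bernoulliMeasure_real_singleton]

lemma iIndepFun_bernoulliPi_indicator :
    iIndepFun (fun e (f : ι → Bool) ↦ if f e then (1 : ℝ) else 0) (bernoulliPi p) :=
  iIndepFun_pi (X := fun _ (b : Bool) ↦ if b then (1 : ℝ) else 0) fun _ ↦ by fun_prop

lemma integral_bernoulliPi_indicator (e : ι) :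
    ∫ f, (if f e then (1 : ℝ) else 0) ∂(bernoulliPi p) = p e := by
  rw [bernoulliPi, integral_comp_eval (μ := fun j ↦ Ber(true, false, p j))
    (f := fun b : Bool ↦ if b then (1 : ℝ) else 0) (by fun_prop), integral_bernoulliMeasure]
  simp

lemma sum_indicator_sub_integral (S : Finset ι) (f : ι → Bool) :
    ∑ e ∈ S, ((if f e then (1 : ℝ) else 0) - ∫ g, (if g e then (1 : ℝ) else 0) ∂(bernoulliPi p)) =
      ∑ e ∈ S, (if f e then (1 : ℝ) else 0) - ∑ e ∈ S, (p e : ℝ) := by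
  simp only [integral_bernoulliPi_indicator, sum_sub_distrib]

lemma bernoulliPi_real_le_sum_sub_ge_le (S : Finset ι) {t : ℝ} (ht : 0 ≤ t) :
    (bernoulliPi p).real
        {f | #S * t ≤ ∑ e ∈ S, (if f e then (1 : ℝ) else 0) - ∑ e ∈ S, (p e : ℝ)} ≤
      Real.exp (-2 * #S * t ^ 2) := by
  simpa only [sum_indicator_sub_integral] using measureReal_le_sum_sub_integral_ge_le
    (iIndepFun_bernoulliPi_indicator p) (fun e ↦ by fun_prop)
    (fun e f ↦ ite_one_zero_mem_Icc (f e)) S ht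

lemma bernoulliPi_real_sum_sub_le_neg_le (S : Finset ι) {t : ℝ} (ht : 0 ≤ t) :
    (bernoulliPi p).real
        {f | ∑ e ∈ S, (if f e then (1 : ℝ) else 0) - ∑ e ∈ S, (p e : ℝ) ≤ -(#S * t)} ≤
      Real.exp (-2 * #S * t ^ 2) := by
  simpa only [sum_indicator_sub_integral] using measureReal_sum_sub_integral_le_neg_le
    (iIndepFun_bernoulliPi_indicator p) (fun e ↦ by fun_prop)
    (fun e f ↦ ite_one_zero_mem_Icc (f e)) S ht

end BernoulliProduct

open Classical in
theorem power_hoeffding_bound_general {ι : Type*} [Fintype ι] [DecidableEq ι]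
    (I O : Finset ι) (hI : I.Nonempty) (hO : O.Nonempty)
    (π : ι → ℝ) (hπ : ∀ e, 0 ≤ π e ∧ π e ≤ 1)
    (k Δ : ℝ)
    (hΔ : Δ = (∑ e ∈ I, π e) / I.card - (∑ e ∈ O, π e) / O.card)
    (hkΔ : k < Δ) :
    ∑ f ∈ Finset.univ.filter (fun f : ι → Bool =>
        (∑ e ∈ I, (if f e then (1 : ℝ) else 0)) / I.card -
          (∑ e ∈ O, (if f e then (1 : ℝ) else 0)) / O.card ≤ k),
      ∏ e : ι, (if f e then π e else 1 - π e) ≤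
      2 * Real.exp (-(I.card : ℝ) * (Δ - k) ^ 2 / 2) +
        2 * Real.exp (-(O.card : ℝ) * (Δ - k) ^ 2 / 2) := by
  set t := (Δ - k) / 2 with ht
  let p : ι → unitInterval := fun e ↦ ⟨π e, hπ e⟩
  calc _ = (bernoulliPi p).real {f | (∑ e ∈ I, (if f e then (1 : ℝ) else 0)) / #I -
          (∑ e ∈ O, (if f e then (1 : ℝ) else 0)) / #O ≤ k} := by
        rw [← coe_filter_univ, bernoulliPi_real_finset]
    _ ≤ (bernoulliPi p).real
          ({f | ∑ e ∈ I, (if f e then (1 : ℝ) else 0) - ∑ e ∈ I, π e ≤ -(#I * t)} ∪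
            {f | #O * t ≤ ∑ e ∈ O, (if f e then (1 : ℝ) else 0) - ∑ e ∈ O, π e}) := by
        refine measureReal_mono fun f hf ↦ sub_le_neg_or_le_sub_of_div_sub_div_le
          (by exact_mod_cast hI.card_pos) (by exact_mod_cast hO.card_pos) ?_
        rw [← hΔ]
        linarith [Set.mem_ofPred.mp hf]
    _ ≤ Real.exp (-2 * #I * t ^ 2) + Real.exp (-2 * #O * t ^ 2) :=
        (measureReal_union_le _ _).trans <| add_le_add
          (bernoulliPi_real_sum_sub_le_neg_le p I (by linarith))
          (bernoulliPi_real_le_sum_sub_ge_le p O (by linarith))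
    _ ≤ _ := by
        have hexp (m : ℝ) : -2 * m * t ^ 2 = -m * (Δ - k) ^ 2 / 2 := by rw [ht]; ring
        rw [hexp, hexp]
        linarith [Real.exp_pos (-#I * (Δ - k) ^ 2 / 2), Real.exp_pos (-#O * (Δ - k) ^ 2 / 2)]

open Classical in
/-- Let `I` and `O` be disjoint nonempty finite sets of indices of
independent Bernoulli variables `B_e` with means `π_e`, and let
`p̂_in, p̂_out, p̄_in, p̄_out` be the corresponding empirical and population means. If
`0 ≤ k < Δ := p̄_in − p̄_out`, then
`P(p̂_in − p̂_out ≤ k) ≤ 2·exp(−|I|(Δ−k)²/2) + 2·exp(−|O|(Δ−k)²/2)`, where the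
probability is the product Bernoulli measure on configurations `f : ι → Bool`. -/
theorem power_hoeffding_bound {ι : Type*} [Fintype ι] [DecidableEq ι]
    (I O : Finset ι) (hdisj : Disjoint I O) (hI : I.Nonempty) (hO : O.Nonempty)
    (π : ι → ℝ) (hπ : ∀ e, 0 ≤ π e ∧ π e ≤ 1)
    (k Δ : ℝ) (hk : 0 ≤ k)
    (hΔ : Δ = (∑ e ∈ I, π e) / I.card - (∑ e ∈ O, π e) / O.card)
    (hΔpos : 0 < Δ) (hkΔ : k < Δ) :
    ∑ f ∈ Finset.univ.filter (fun f : ι → Bool =>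
        (∑ e ∈ I, (if f e then (1 : ℝ) else 0)) / I.card -
          (∑ e ∈ O, (if f e then (1 : ℝ) else 0)) / O.card ≤ k),
      ∏ e : ι, (if f e then π e else 1 - π e) ≤
      2 * Real.exp (-(I.card : ℝ) * (Δ - k) ^ 2 / 2) +
        2 * Real.exp (-(O.card : ℝ) * (Δ - k) ^ 2 / 2) :=
  power_hoeffding_bound_general I O hI hO π hπ k Δ hΔ hkΔ
end
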